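/- Let V ∈ ℝ^{n×m} with n ≤ m and no ties within any row. Then the output of the soft one-round algorithm sr_τ(V) converges entrywise as τ → 0⁺ to the output r(V) of the exact one-round selection, where r(V)_{ij} = 1 iff j is the maximizer of v_{ij'} over the set C_i of goods remaining after agents 1,...,i−1 have picked. -/

import Mathlib

open Finset

/-- Tie-breaking argmax: the smallest index in `C` attaining the maximum of `v` on `C`. -/
noncomputable def pickTB (v : ℕ → ℝ) (C : Finset ℕ) : ℕ :=
  if h : (C.filter fun j => ∀ j' ∈ C, v j' ≤ v j).Nonempty
  then (C.filter fun j => ∀ j' ∈ C, v j' ≤ v j).min' h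
  else 0

/-- softmax over goods `0, ..., m-1`. -/
noncomputable def softmaxOn (m : ℕ) (z : ℕ → ℝ) (j : ℕ) : ℝ :=
  Real.exp (z j) / ∑ j' ∈ Finset.range m, Real.exp (z j')

/-- minimum entry of a row over goods `0, ..., m-1`. -/
noncomputable def rowMin (m : ℕ) (vi : ℕ → ℝ) : ℝ :=
  if h : (Finset.range m).Nonempty then (Finset.range m).inf' h vi else 0

/-- State of the soft one-round algorithm `sr_τ` after `i` iterations:
`(y^{(i)}, c^{(i)})`, where `c^{(0)} = 1`, and at iteration `i+1` (agent `i`, 0-indexed)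
`y = softmax(((V[i] − min(V[i])·1 + 1) ⊙ c)/τ)` and `c ← (1 − y) ⊙ c`. -/
noncomputable def srState (τ : ℝ) (v : ℕ → ℕ → ℝ) (m : ℕ) : ℕ → (ℕ → ℝ) × (ℕ → ℝ)
  | 0 => (fun _ => 0, fun _ => 1)
  | i + 1 =>
    let c := (srState τ v m i).2
    let y := softmaxOn m fun j => (v i j - rowMin m (v i) + 1) * c j / τ
    (y, fun j => (1 - y j) * c j)

/-- Row `i` (0-indexed) of the output matrix `R` of the soft one-round algorithm. -/
noncomputable def srOut (τ : ℝ) (v : ℕ → ℕ → ℝ) (m : ℕ) (i : ℕ) : ℕ → ℝ :=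
  (srState τ v m (i + 1)).1

/-- Remaining goods `C_i` in the exact one-round procedure (0-indexed: `C 0 = [m]`). -/
noncomputable def oneRoundC (v : ℕ → ℕ → ℝ) (m : ℕ) : ℕ → Finset ℕ
  | 0 => Finset.range m
  | i + 1 => (oneRoundC v m i).erase (pickTB (v i) (oneRoundC v m i))

/-- Output matrix of the exact one-round procedure: `r(V)_{ij} = 1` iff agent `i`
picks good `j` (the maximizer of `v i` over `C_i`). -/
noncomputable def oneRoundMat (v : ℕ → ℕ → ℝ) (m : ℕ) (i j : ℕ) : ℝ :=
  if j = pickTB (v i) (oneRoundC v m i) then 1 else 0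

open Filter Topology

/-! As `τ → 0⁺` the softmax of `z / τ` concentrates on the strict maximiser of the limit scores.
The scores of agent `i` are `(v i j - min v i + 1) · c j`; by induction `c` tends to the indicator
of the remaining goods `C_i`, so the limit scores are positive (at least `1`) on `C_i` and `0` off
it. Without ties their strict maximiser is agent `i`'s exact pick, hence `y` tends to the indicator
of that pick and `(1 - y) ⊙ c` to the indicator of `C_{i+1}`. -/

section Softmax

lemma softmaxOn_sub_const (m : ℕ) (z : ℕ → ℝ) (a : ℝ) (j : ℕ) :
    softmaxOn m (fun k => z k - a) j = softmaxOn m z j := by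
  simp only [softmaxOn, Real.exp_sub, ← Finset.sum_div]
  exact div_div_div_cancel_right₀ (Real.exp_ne_zero a) _ _

lemma tendsto_softmaxOn_div_nhdsGT {m : ℕ} {z : ℝ → ℕ → ℝ} {L : ℕ → ℝ} {j₀ : ℕ} (hj₀ : j₀ < m)
    (hz : ∀ k < m, Tendsto (fun τ => z τ k) (𝓝[>] 0) (𝓝 (L k)))
    (hmax : ∀ k < m, k ≠ j₀ → L k < L j₀) {j : ℕ} (hj : j < m) :
    Tendsto (fun τ => softmaxOn m (fun k => z τ k / τ) j) (𝓝[>] 0)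
      (𝓝 (if j = j₀ then 1 else 0)) := by
  set g : ℝ → ℕ → ℝ := fun τ k => Real.exp ((z τ k - z τ j₀) / τ)
  have hg : ∀ k < m, Tendsto (fun τ => g τ k) (𝓝[>] 0) (𝓝 (if k = j₀ then 1 else 0)) := by
    intro k hk
    by_cases hkj : k = j₀
    · subst hkj
      simp [g]
    · rw [if_neg hkj]
      have hdiff := ((hz k hk).sub (hz j₀ hj₀)).neg_mul_atTop
        (sub_neg.2 (hmax k hk hkj)) tendsto_inv_nhdsGT_zero
      simp only [← div_eq_mul_inv] at hdiff
      exact Real.tendsto_exp_atBot.comp hdiff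
  have hsum : Tendsto (fun τ => ∑ k ∈ range m, g τ k) (𝓝[>] 0) (𝓝 1) := by
    have := tendsto_finsetSum (range m) fun k hk => hg k (mem_range.1 hk)
    rwa [sum_ite_eq' (range m) j₀ (fun _ => (1 : ℝ)), if_pos (mem_range.2 hj₀)] at this
  have hratio := (hg j hj).div hsum one_ne_zero
  rw [div_one] at hratio
  refine hratio.congr fun τ => ?_
  rw [← softmaxOn_sub_const m _ (z τ j₀ / τ)]
  simp only [softmaxOn, g, sub_div, Pi.div_apply]

end Softmax

section OneRound

lemma pickTB_mem_and_le {v : ℕ → ℝ} {C : Finset ℕ} (hC : C.Nonempty) :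
    pickTB v C ∈ C ∧ ∀ j ∈ C, v j ≤ v (pickTB v C) := by
  obtain ⟨x, hx, hxmax⟩ := C.exists_max_image v hC
  have hne : (C.filter fun j => ∀ j' ∈ C, v j' ≤ v j).Nonempty := ⟨x, mem_filter.2 ⟨hx, hxmax⟩⟩
  rw [pickTB, dif_pos hne]
  exact mem_filter.1 (min'_mem _ hne)

lemma oneRoundC_subset_range (v : ℕ → ℕ → ℝ) (m : ℕ) : ∀ i, oneRoundC v m i ⊆ range m
  | 0 => subset_rfl
  | i + 1 => (erase_subset _ _).trans (oneRoundC_subset_range v m i)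

lemma card_oneRoundC (v : ℕ → ℕ → ℝ) (m : ℕ) : ∀ i ≤ m, #(oneRoundC v m i) = m - i
  | 0, _ => card_range m
  | i + 1, hi => by
    have hcard := card_oneRoundC v m i (by omega)
    have hne : (oneRoundC v m i).Nonempty := by
      rw [← card_pos, hcard]
      omega
    rw [oneRoundC, card_erase_of_mem (pickTB_mem_and_le hne).1, hcard]
    omega

lemma oneRoundC_nonempty (v : ℕ → ℕ → ℝ) {m i : ℕ} (hi : i < m) : (oneRoundC v m i).Nonempty := by
  rw [← card_pos, card_oneRoundC v m i hi.le]
  omega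

end OneRound

section SoftOneRound

variable {v : ℕ → ℕ → ℝ} {m : ℕ}

lemma score_lt_score_pickTB {i : ℕ} (hi : i < m) (hinj : Set.InjOn (v i) (Set.Iio m))
    {k : ℕ} (hk : k < m) (hkp : k ≠ pickTB (v i) (oneRoundC v m i)) :
    (v i k - rowMin m (v i) + 1) * (if k ∈ oneRoundC v m i then 1 else 0) <
      (v i (pickTB (v i) (oneRoundC v m i)) - rowMin m (v i) + 1) *
        (if pickTB (v i) (oneRoundC v m i) ∈ oneRoundC v m i then 1 else 0) := by
  set C := oneRoundC v m i
  set p := pickTB (v i) C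
  obtain ⟨hpC, hpmax⟩ := pickTB_mem_and_le (v := v i) (oneRoundC_nonempty v hi)
  have hpm : p < m := mem_range.1 (oneRoundC_subset_range v m i hpC)
  have hmin : rowMin m (v i) ≤ v i p := by
    rw [rowMin, dif_pos ⟨p, mem_range.2 hpm⟩]
    exact inf'_le _ (mem_range.2 hpm)
  rw [if_pos hpC, mul_one]
  by_cases hkC : k ∈ C
  · have hlt : v i k < v i p := (hpmax k hkC).lt_of_ne fun h => hkp (hinj hk hpm h)
    rw [if_pos hkC]
    linarith
  · rw [if_neg hkC]
    linarith

lemma tendsto_srOut_of_tendsto_srState_snd {i : ℕ} (hi : i < m)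
    (hinj : Set.InjOn (v i) (Set.Iio m))
    (hc : ∀ k < m, Tendsto (fun τ => (srState τ v m i).2 k) (𝓝[>] 0)
      (𝓝 (if k ∈ oneRoundC v m i then 1 else 0)))
    {j : ℕ} (hj : j < m) :
    Tendsto (fun τ => srOut τ v m i j) (𝓝[>] 0) (𝓝 (oneRoundMat v m i j)) := by
  have hpm : pickTB (v i) (oneRoundC v m i) < m :=
    mem_range.1 (oneRoundC_subset_range v m i
      (pickTB_mem_and_le (oneRoundC_nonempty v hi)).1)
  have := tendsto_softmaxOn_div_nhdsGT hpm (fun k hk => (hc k hk).const_mul _)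
    (fun k hk hkp => score_lt_score_pickTB hi hinj hk hkp) hj
  simpa only [srOut, srState, oneRoundMat, mul_div_assoc] using this

lemma tendsto_srState_snd {i : ℕ} (hi : i ≤ m)
    (hties : ∀ k < i, Set.InjOn (v k) (Set.Iio m)) {j : ℕ} (hj : j < m) :
    Tendsto (fun τ => (srState τ v m i).2 j) (𝓝[>] 0)
      (𝓝 (if j ∈ oneRoundC v m i then 1 else 0)) := by
  induction i generalizing j with
  | zero => simp [srState, oneRoundC, hj]
  | succ i ih =>
    have hc := fun k (hk : k < m) => ih (by omega) (fun k' hk' => hties k' (by omega)) hk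
    have hy := tendsto_srOut_of_tendsto_srState_snd (by omega) (hties i (by omega)) hc hj
    have hval : (1 - oneRoundMat v m i j) * (if j ∈ oneRoundC v m i then 1 else 0) =
        if j ∈ oneRoundC v m (i + 1) then 1 else 0 := by
      by_cases hjp : j = pickTB (v i) (oneRoundC v m i) <;>
        by_cases hjC : j ∈ oneRoundC v m i <;> simp [oneRoundC, oneRoundMat, hjp, hjC]
    rw [← hval]
    exact (tendsto_const_nhds.sub hy).mul (hc j hj)

end SoftOneRound


theorem srOut_tendsto_oneRound_general (n m : ℕ) (v : ℕ → ℕ → ℝ)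
    (hnm : n ≤ m)
    (hties : ∀ i, i < n → ∀ j, j < m → ∀ j', j' < m → j ≠ j' → v i j ≠ v i j')
    (i : ℕ) (hi : i < n) (j : ℕ) (hj : j < m) :
    Tendsto (fun τ : ℝ => srOut τ v m i j)
      (nhdsWithin 0 (Set.Ioi 0)) (nhds (oneRoundMat v m i j)) := by
  have hinj : ∀ k < n, Set.InjOn (v k) (Set.Iio m) := fun k hk j hj j' hj' h =>
    by_contra fun hne => hties k hk j hj j' hj' hne h
  exact tendsto_srOut_of_tendsto_srState_snd (by omega) (hinj i hi)
    (fun k hk => tendsto_srState_snd (by omega) (fun k' hk' => hinj k' (by omega)) hk) hj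

/-- for `n ≤ m` and no ties within any row of `V`, the soft one-round
output `sr_τ(V)` converges entrywise, as `τ → 0⁺`, to the exact one-round output `r(V)`. -/
theorem srOut_tendsto_oneRound (n m : ℕ) (v : ℕ → ℕ → ℝ)
    (hn : 0 < n) (hnm : n ≤ m)
    (hties : ∀ i, i < n → ∀ j, j < m → ∀ j', j' < m → j ≠ j' → v i j ≠ v i j')
    (i : ℕ) (hi : i < n) (j : ℕ) (hj : j < m) :
    Tendsto (fun τ : ℝ => srOut τ v m i j)
      (nhdsWithin 0 (Set.Ioi 0)) (nhds (oneRoundMat v m i j)) :=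
  srOut_tendsto_oneRound_general n m v hnm hties i hi j hj
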